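/- arXiv:2501.00891 — 5 statements merged into one kernel-verified Lean document; each statement's English description precedes it below -/
import Mathlib

section
/- Let a > 0 and b > 0 be real numbers with a*b ≥ 1. If a real number t satisfies t ≥ 2*a*log(a*b), then t ≥ a*log(1 + b*t). -/
/-! Put `c = a * b` and `s = t / a`, so that the claim reads `log (1 + c * s) ≤ s` for
`s ≥ 2 log c`. Writing `exp s = c² · exp (s - 2 log c) ≥ c² (1 + s - 2 log c)`, the excess
over `1 + c * s` is `c (c - 1) (s - 2 log c) + (c² - 1 - 2 c log c)`; the first term is
nonnegative by hypothesis and the second by `log c ≤ sinh (log c) = (c - c⁻¹) / 2`. -/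

open Real

lemma Real.two_mul_log_le_sub_inv {c : ℝ} (hc : 1 ≤ c) : 2 * log c ≤ c - c⁻¹ := by
  have h := self_le_sinh_iff.2 (log_nonneg hc)
  rw [sinh_log (by positivity)] at h
  linarith

lemma Real.one_add_mul_le_exp {c s : ℝ} (hc : 1 ≤ c) (hs : 2 * log c ≤ s) :
    1 + c * s ≤ exp s := by
  have hc0 : 0 < c := by positivity
  have hexp : exp s = c ^ 2 * exp (s - 2 * log c) := by
    rw [exp_sub, mul_comm 2, exp_mul, exp_log hc0, rpow_two]
    field_simp
  have hlin : c ^ 2 * (s - 2 * log c + 1) ≤ exp s :=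
    hexp ▸ mul_le_mul_of_nonneg_left (add_one_le_exp _) (by positivity)
  have hsinh : 2 * log c * c ≤ c ^ 2 - 1 := by
    have := mul_le_mul_of_nonneg_right (two_mul_log_le_sub_inv hc) hc0.le
    rwa [sub_mul, inv_mul_cancel₀ hc0.ne', ← sq] at this
  have hdrift : 0 ≤ c * (c - 1) * (s - 2 * log c) :=
    mul_nonneg (mul_nonneg hc0.le (by linarith)) (by linarith)
  nlinarith

lemma Real.log_one_add_mul_le {c s : ℝ} (hc : 1 ≤ c) (hs : 2 * log c ≤ s) :
    log (1 + c * s) ≤ s := by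
  have hs0 : 0 ≤ s := le_trans (by linarith [log_nonneg hc]) hs
  rw [log_le_iff_le_exp (by positivity)]
  exact one_add_mul_le_exp hc hs

theorem stmt_0_general (a b t : ℝ) (ha : 0 < a) (hab : 1 ≤ a * b)
    (ht : t ≥ 2 * a * Real.log (a * b)) :
    t ≥ a * Real.log (1 + b * t) := by
  have hs : 2 * log (a * b) ≤ t / a := by
    rw [le_div_iff₀ ha]
    linarith
  have hbt : b * t = a * b * (t / a) := by
    field_simp
  calc a * log (1 + b * t) ≤ a * (t / a) :=
        mul_le_mul_of_nonneg_left (hbt ▸ log_one_add_mul_le hab hs) ha.le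
    _ = t := by field_simp

/-- Basic arithmetic lemma: for `a, b > 0` with `a * b ≥ 1`, if
`t ≥ 2 * a * log (a * b)` then `t ≥ a * log (1 + b * t)`. -/
theorem stmt_0 (a b t : ℝ) (ha : 0 < a) (hb : 0 < b) (hab : 1 ≤ a * b)
    (ht : t ≥ 2 * a * Real.log (a * b)) :
    t ≥ a * Real.log (1 + b * t) :=
  stmt_0_general a b t ha hab ht
end

section
/- Let (x_s)_{s≥1} be an infinite sequence of independent Bernoulli random variables with common mean p, where 0 < p ≤ 1/2. Let δ > 0 and B > 0. Then with probability at least 1 − δ, for every integer t with t ≥ (16/p)·log(1/δ) + 4B/p, one has Σ_{s=1}^{t} x_s ≥ B. -/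
/-!
Chernoff's method with parameter `λ = log 2`: a `{0,1}`-valued variable of mean `p` has
`E[exp (-λ X)] = 1 - p/2 ≤ exp (-p/2)`, so by independence
`P(S_t ≤ B) ≤ exp (λ B - p t / 2)`, which is at most `δ` as soon as
`p t ≥ 16 log (1/δ) + 4 B`. Since the partial sums are nondecreasing, it suffices to apply
this bound at the single time `t₀ = ⌈(16/p) log (1/δ) + 4B/p⌉`.
-/

open MeasureTheory ProbabilityTheory Real Finset

section Bernoulli

variable {Ω : Type*} [MeasurableSpace Ω] {μ : Measure Ω} [IsProbabilityMeasure μ]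

lemma mgf_of_ae_zero_or_one {X : Ω → ℝ} (hX : Measurable X)
    (hval : ∀ᵐ ω ∂μ, X ω = 0 ∨ X ω = 1) (t : ℝ) :
    mgf X μ t = 1 + (exp t - 1) * μ.real {ω | X ω = 1} := by
  have hA : MeasurableSet {ω | X ω = 1} := hX (measurableSet_singleton 1)
  have hexp : (fun ω ↦ exp (t * X ω)) =ᵐ[μ]
      fun ω ↦ 1 + (exp t - 1) * {ω | X ω = 1}.indicator 1 ω := by
    filter_upwards [hval] with ω hω
    rcases hω with h | h <;> simp [h]
  rw [mgf, integral_congr_ae hexp, integral_add (integrable_const 1)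
    (((integrable_const 1).indicator hA).const_mul _), integral_const_mul,
    integral_indicator_one hA]
  simp

lemma mgf_le_exp_of_ae_zero_or_one {X : Ω → ℝ} (hX : Measurable X)
    (hval : ∀ᵐ ω ∂μ, X ω = 0 ∨ X ω = 1) (t : ℝ) :
    mgf X μ t ≤ exp ((exp t - 1) * μ.real {ω | X ω = 1}) := by
  rw [mgf_of_ae_zero_or_one hX hval]
  linarith [add_one_le_exp ((exp t - 1) * μ.real {ω | X ω = 1})]

lemma measureReal_sum_le_le_of_bernoulli {ι : Type*} {x : ι → Ω → ℝ}
    (hmeas : ∀ i, Measurable (x i)) (hindep : iIndepFun x μ)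
    (hval : ∀ i, ∀ᵐ ω ∂μ, x i ω = 0 ∨ x i ω = 1) {p : ℝ}
    (hmean : ∀ i, μ.real {ω | x i ω = 1} = p) (I : Finset ι) {l : ℝ} (hl : 0 ≤ l) (B : ℝ) :
    μ.real {ω | ∑ i ∈ I, x i ω ≤ B} ≤ exp (l * B - (1 - exp (-l)) * p * #I) := by
  have hint : Integrable (fun ω ↦ exp (-l * (∑ i ∈ I, x i) ω)) μ :=
    hindep.integrable_exp_mul_sum hmeas fun i _ ↦ integrable_exp_mul_of_mem_Icc (a := 0) (b := 1)
      (hmeas i).aemeasurable (by filter_upwards [hval i] with ω hω; rcases hω with h | h <;> simp [h])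
  have hmgf : mgf (∑ i ∈ I, x i) μ (-l) ≤ exp ((exp (-l) - 1) * p) ^ #I := by
    rw [hindep.mgf_sum hmeas, ← prod_const]
    exact prod_le_prod (fun _ _ ↦ mgf_nonneg) fun i _ ↦
      hmean i ▸ mgf_le_exp_of_ae_zero_or_one (hmeas i) (hval i) (-l)
  calc μ.real {ω | ∑ i ∈ I, x i ω ≤ B}
      = μ.real {ω | (∑ i ∈ I, x i) ω ≤ B} := by simp only [Finset.sum_apply]
    _ ≤ exp (l * B) * mgf (∑ i ∈ I, x i) μ (-l) := by
      simpa using measure_le_le_exp_mul_mgf B (neg_nonpos.mpr hl) hint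
    _ ≤ exp (l * B) * exp ((exp (-l) - 1) * p) ^ #I := by gcongr
    _ = exp (l * B - (1 - exp (-l)) * p * #I) := by
      rw [← exp_nat_mul, ← exp_add]; ring_nf

end Bernoulli

lemma exp_log_two_mul_sub_le {p B δ t : ℝ} (hp : 0 < p) (hB : 0 ≤ B) (hδ : 0 < δ) (hδ1 : δ ≤ 1)
    (ht : 16 / p * log (1 / δ) + 4 * B / p ≤ t) :
    exp (log 2 * B - (1 - exp (-log 2)) * p * t) ≤ δ := by
  have hexp : exp (-log 2) = 1 / 2 := by rw [exp_neg, exp_log two_pos]; norm_num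
  have hlog2 : log 2 ≤ 1 := by linarith [log_le_sub_one_of_pos (x := 2) two_pos]
  have hlogδ : 0 ≤ log (1 / δ) := log_nonneg (one_le_one_div hδ hδ1)
  have hpt : 16 * log (1 / δ) + 4 * B ≤ p * t :=
    calc 16 * log (1 / δ) + 4 * B = p * (16 / p * log (1 / δ) + 4 * B / p) := by field_simp
      _ ≤ p * t := by gcongr
  rw [← exp_log hδ, exp_le_exp, hexp, ← neg_neg (log δ), ← log_inv, inv_eq_one_div]
  nlinarith

theorem stmt_3_general {Ω : Type*} [MeasurableSpace Ω] (μ : Measure Ω)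
    [IsProbabilityMeasure μ] (p : ℝ) (hp0 : 0 < p)
    (x : ℕ → Ω → ℝ) (hmeas : ∀ s, Measurable (x s))
    (hindep : iIndepFun x μ)
    (hval : ∀ s, ∀ᵐ ω ∂μ, x s ω = 0 ∨ x s ω = 1)
    (hmean : ∀ s, μ {ω | x s ω = 1} = ENNReal.ofReal p)
    (δ B : ℝ) (hδ : 0 < δ) (hB : 0 < B) :
    1 - ENNReal.ofReal δ ≤
      μ {ω | ∀ t : ℕ, (16 / p) * Real.log (1 / δ) + 4 * B / p ≤ (t : ℝ) →
        B ≤ ∑ s ∈ Finset.Icc 1 t, x s ω} := by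
  set T := (16 / p) * Real.log (1 / δ) + 4 * B / p
  set t₀ := ⌈T⌉₊
  have hfail : μ {ω | ∀ t : ℕ, T ≤ t → B ≤ ∑ s ∈ Icc 1 t, x s ω}ᶜ ≤
      μ {ω | ∑ s ∈ Icc 1 t₀, x s ω ≤ B} := by
    refine measure_mono_ae ?_
    filter_upwards [ae_all_iff.2 hval] with ω hω hbad
    obtain ⟨t, ht, hlt⟩ : ∃ t : ℕ, T ≤ t ∧ ∑ s ∈ Icc 1 t, x s ω < B := by
      change ¬ ∀ t : ℕ, _ at hbad
      push Not at hbad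
      exact hbad
    refine le_trans (sum_le_sum_of_subset_of_nonneg (Icc_subset_Icc_right (Nat.ceil_le.2 ht))
      fun s _ _ ↦ ?_) hlt.le
    rcases hω s with h | h <;> simp [h]
  have hchernoff : μ {ω | ∑ s ∈ Icc 1 t₀, x s ω ≤ B} ≤ ENNReal.ofReal δ := by
    rcases le_or_gt 1 δ with hδ1 | hδ1
    · exact prob_le_one.trans (ENNReal.one_le_ofReal.2 hδ1)
    rw [← ofReal_measureReal]
    refine ENNReal.ofReal_le_ofReal ((measureReal_sum_le_le_of_bernoulli hmeas hindep hval
      (fun s ↦ by rw [measureReal_def, hmean, ENNReal.toReal_ofReal hp0.le]) _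
      (log_nonneg one_le_two) B).trans ?_)
    rw [Nat.card_Icc, add_tsub_cancel_right]
    exact exp_log_two_mul_sub_le hp0 hB.le hδ hδ1.le (Nat.le_ceil T)
  rw [tsub_le_iff_right]
  calc 1 = μ Set.univ := measure_univ.symm
    _ ≤ μ _ + μ _ᶜ := measure_univ_le_add_compl _
    _ ≤ _ := by gcongr; exact hfail.trans hchernoff

/-- For an i.i.d. sequence of Bernoulli random variables with mean
`0 < p ≤ 1/2`, with probability at least `1 - δ`, for every
`t ≥ (16/p) * log (1/δ) + 4B/p` one has `∑_{s=1}^t x s ≥ B`. -/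
theorem stmt_3 {Ω : Type*} [MeasurableSpace Ω] (μ : Measure Ω)
    [IsProbabilityMeasure μ] (p : ℝ) (hp0 : 0 < p) (hp : p ≤ 1 / 2)
    (x : ℕ → Ω → ℝ) (hmeas : ∀ s, Measurable (x s))
    (hindep : iIndepFun x μ)
    (hval : ∀ s, ∀ᵐ ω ∂μ, x s ω = 0 ∨ x s ω = 1)
    (hmean : ∀ s, μ {ω | x s ω = 1} = ENNReal.ofReal p)
    (δ B : ℝ) (hδ : 0 < δ) (hB : 0 < B) :
    1 - ENNReal.ofReal δ ≤
      μ {ω | ∀ t : ℕ, (16 / p) * Real.log (1 / δ) + 4 * B / p ≤ (t : ℝ) →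
        B ≤ ∑ s ∈ Finset.Icc 1 t, x s ω} :=
  stmt_3_general μ p hp0 x hmeas hindep hval hmean δ B hδ hB
end

section
/- Let λ > 0, θ ∈ ℝ^d, and let x_1, …, x_n ∈ ℝ^d and η_1, …, η_n ∈ ℝ. Set r_τ = x_τᵀ θ + η_τ, S̄ = λ·I + Σ_{τ=1}^{n} x_τ x_τᵀ, and θ̂ = S̄^{−1} · Σ_{τ=1}^{n} r_τ · x_τ. Then: ‖θ̂ − θ‖₂ ≤ ( ‖ Σ_{τ=1}^{n} η_τ x_τ ‖_{S̄^{−1}} + √λ · ‖θ‖₂ ) / √( λ_min(S̄) ). -/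
/-!
Write `u = ∑ η_τ x_τ - λθ`. Since `∑ r_τ x_τ = S̄θ + u`, the error is `θ̂ - θ = S̄⁻¹u`, and
`λ_min ‖S̄⁻¹u‖₂² ≤ (S̄⁻¹u)ᵀ S̄ (S̄⁻¹u) = ‖u‖²_{S̄⁻¹}`. The triangle inequality for the seminorm
`‖·‖_{S̄⁻¹}` splits off the noise term, and `S̄ ≥ λI` gives `S̄⁻¹ ≤ λ⁻¹I`, so that
`‖λθ‖_{S̄⁻¹} ≤ √λ ‖θ‖₂`.
-/

open Matrix

noncomputable def mnorm {d : ℕ} (V : Matrix (Fin d) (Fin d) ℝ) (v : Fin d → ℝ) : ℝ :=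
  Real.sqrt (v ⬝ᵥ V *ᵥ v)

noncomputable def l2norm {d : ℕ} (v : Fin d → ℝ) : ℝ :=
  Real.sqrt (∑ i, v i ^ 2)

/-- Junk value `0` for a non-symmetric matrix, and also for `d = 0` (an empty infimum). -/
noncomputable def minEig {d : ℕ} (M : Matrix (Fin d) (Fin d) ℝ) : ℝ :=
  if h : M.IsHermitian then ⨅ i, h.eigenvalues i else 0

open scoped MatrixOrder

namespace Matrix

variable {ι : Type*} [DecidableEq ι]

lemma posDef_of_smul_one_le {A : Matrix ι ι ℝ} {c : ℝ} (hc : 0 < c) (h : c • 1 ≤ A) :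
    A.PosDef := by
  simpa using (PosDef.one.smul hc).add_posSemidef (le_iff.mp h)

variable [Fintype ι]

lemma IsHermitian.smul_one_le_iff {A : Matrix ι ι ℝ} (hA : A.IsHermitian) {c : ℝ} :
    c • 1 ≤ A ↔ ∀ i, c ≤ hA.eigenvalues i := by
  rw [← Algebra.algebraMap_eq_smul_one, algebraMap_le_iff_le_spectrum hA.isSelfAdjoint,
    hA.spectrum_real_eq_range_eigenvalues, Set.forall_mem_range]

lemma mul_dotProduct_self_le_of_smul_one_le {A : Matrix ι ι ℝ} {c : ℝ} (h : c • 1 ≤ A)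
    (v : ι → ℝ) : c * (v ⬝ᵥ v) ≤ v ⬝ᵥ A *ᵥ v := by
  have := (le_iff.mp h).dotProduct_mulVec_nonneg v
  rwa [star_trivial, sub_mulVec, smul_mulVec, one_mulVec, dotProduct_sub, dotProduct_smul,
    smul_eq_mul, sub_nonneg] at this

lemma mul_dotProduct_inv_mulVec_le {A : Matrix ι ι ℝ} {c : ℝ} (hc : 0 < c) (h : c • 1 ≤ A)
    (v : ι → ℝ) : c * (v ⬝ᵥ A⁻¹ *ᵥ v) ≤ v ⬝ᵥ v := by
  have hdet : IsUnit A.det := (isUnit_iff_isUnit_det A).mp (posDef_of_smul_one_le hc h).isUnit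
  set w := A⁻¹ *ᵥ v
  set M := A - c • 1
  have hv : v = M *ᵥ w + c • w := by
    rw [sub_mulVec, smul_mulVec, one_mulVec, sub_add_cancel, mulVec_mulVec,
      mul_nonsing_inv _ hdet, one_mulVec]
  have hM : 0 ≤ w ⬝ᵥ M *ᵥ w := by
    simpa only [star_trivial] using (le_iff.mp h).dotProduct_mulVec_nonneg w
  -- `A² - c A = M² + c M` with `M ≥ 0`, evaluated at `w`.
  have key : v ⬝ᵥ v - c * (v ⬝ᵥ w) = (M *ᵥ w) ⬝ᵥ (M *ᵥ w) + c * (w ⬝ᵥ M *ᵥ w) := by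
    rw [hv]
    simp only [add_dotProduct, dotProduct_add, smul_dotProduct, dotProduct_smul, smul_eq_mul,
      dotProduct_comm (M *ᵥ w) w]
    ring
  have hMw : 0 ≤ (M *ᵥ w) ⬝ᵥ (M *ᵥ w) := by
    simpa only [star_trivial] using dotProduct_self_star_nonneg (M *ᵥ w)
  nlinarith [mul_nonneg hc.le hM]

end Matrix

section

variable {d : ℕ}

lemma l2norm_eq_sqrt_dotProduct (v : Fin d → ℝ) : l2norm v = √(v ⬝ᵥ v) := by
  simp only [l2norm, dotProduct, sq]

lemma mnorm_nonneg (B : Matrix (Fin d) (Fin d) ℝ) (v : Fin d → ℝ) : 0 ≤ mnorm B v :=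
  Real.sqrt_nonneg _

lemma mnorm_sub_le {B : Matrix (Fin d) (Fin d) ℝ} (hB : B.PosSemidef) (u v : Fin d → ℝ) :
    mnorm B (u - v) ≤ mnorm B u + mnorm B v := by
  simp only [mnorm, dotProduct_comm _ (B *ᵥ _)]
  exact @norm_sub_le _ (B.toSeminormedAddCommGroup hB).toSeminormedAddGroup u v

lemma minEig_smul_one_le {A : Matrix (Fin d) (Fin d) ℝ} (hA : A.IsHermitian) :
    minEig A • 1 ≤ A := by
  rw [hA.smul_one_le_iff, minEig, dif_pos hA]
  exact fun i => ciInf_le (Set.finite_range _).bddBelow i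

lemma minEig_pos [NeZero d] {A : Matrix (Fin d) (Fin d) ℝ} (hA : A.PosDef) : 0 < minEig A := by
  obtain ⟨i, hi⟩ := exists_eq_ciInf_of_finite (f := hA.1.eigenvalues)
  rw [minEig, dif_pos hA.1, ← hi]
  exact hA.eigenvalues_pos i

lemma l2norm_inv_mulVec_le {A : Matrix (Fin d) (Fin d) ℝ} (hA : A.PosDef) (u : Fin d → ℝ) :
    l2norm (A⁻¹ *ᵥ u) ≤ mnorm A⁻¹ u / √(minEig A) := by
  rcases Nat.eq_zero_or_pos d with rfl | hd
  · simpa [l2norm] using div_nonneg (mnorm_nonneg _ _) (Real.sqrt_nonneg _)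
  have : NeZero d := ⟨hd.ne'⟩
  have hdet : IsUnit A.det := (isUnit_iff_isUnit_det A).mp hA.isUnit
  set w := A⁻¹ *ᵥ u
  have hquad : w ⬝ᵥ A *ᵥ w = u ⬝ᵥ A⁻¹ *ᵥ u := by
    rw [mulVec_mulVec, mul_nonsing_inv _ hdet, one_mulVec, dotProduct_comm]
  have hc := minEig_pos hA
  rw [l2norm_eq_sqrt_dotProduct, mnorm, ← Real.sqrt_div' _ hc.le, ← hquad]
  refine Real.sqrt_le_sqrt ((le_div_iff₀ hc).2 ?_)
  rw [mul_comm]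
  exact mul_dotProduct_self_le_of_smul_one_le (minEig_smul_one_le hA.1) w

lemma mnorm_inv_smul_le {A : Matrix (Fin d) (Fin d) ℝ} {c : ℝ} (hc : 0 < c) (h : c • 1 ≤ A)
    (v : Fin d → ℝ) : mnorm A⁻¹ (c • v) ≤ √c * l2norm v := by
  rw [mnorm, l2norm_eq_sqrt_dotProduct, ← Real.sqrt_mul hc.le]
  gcongr
  rw [mulVec_smul, smul_dotProduct, dotProduct_smul, smul_eq_mul, smul_eq_mul]
  exact mul_le_mul_of_nonneg_left (mul_dotProduct_inv_mulVec_le hc h v) hc.le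

lemma sum_smul_eq_mulVec_add {n : ℕ} (lam : ℝ) (θ : Fin d → ℝ) (x : Fin n → Fin d → ℝ)
    (η : Fin n → ℝ) :
    ∑ τ, (x τ ⬝ᵥ θ + η τ) • x τ =
      (lam • 1 + ∑ τ, vecMulVec (x τ) (x τ)) *ᵥ θ + (∑ τ, η τ • x τ - lam • θ) := by
  simp only [add_mulVec, sum_mulVec, vecMulVec_mulVec, op_smul_eq_smul, smul_mulVec,
    one_mulVec, add_smul, Finset.sum_add_distrib]
  abel

end

/-- ℓ² error bound for the regularized least-squares estimator:
with `r τ = x τᵀ θ + η τ`, `S̄ = λ • I + ∑ τ, x τ x τᵀ` and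
`θ̂ = S̄⁻¹ (∑ τ, r τ • x τ)`, we have
`‖θ̂ - θ‖₂ ≤ (‖∑ τ, η τ • x τ‖_{S̄⁻¹} + √λ ‖θ‖₂) / √(λ_min S̄)`. -/
theorem stmt_9 (d n : ℕ) (lam : ℝ) (hlam : 0 < lam)
    (θ : Fin d → ℝ) (x : Fin n → Fin d → ℝ) (η r : Fin n → ℝ)
    (hr : ∀ τ, r τ = x τ ⬝ᵥ θ + η τ)
    (Sbar : Matrix (Fin d) (Fin d) ℝ)
    (hS : Sbar = lam • (1 : Matrix (Fin d) (Fin d) ℝ) + ∑ τ, vecMulVec (x τ) (x τ))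
    (θhat : Fin d → ℝ)
    (hθhat : θhat = Sbar⁻¹ *ᵥ (∑ τ, r τ • x τ)) :
    l2norm (θhat - θ) ≤
      (mnorm Sbar⁻¹ (∑ τ, η τ • x τ) + Real.sqrt lam * l2norm θ) /
        Real.sqrt (minEig Sbar) := by
  have hle : lam • 1 ≤ Sbar := by
    rw [le_iff, hS, add_sub_cancel_left]
    exact posSemidef_sum _ fun τ _ => by simpa using posSemidef_vecMulVec_self_star (x τ)
  have hpos := posDef_of_smul_one_le hlam hle
  have hdet : IsUnit Sbar.det := (isUnit_iff_isUnit_det Sbar).mp hpos.isUnit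
  have herr : θhat - θ = Sbar⁻¹ *ᵥ (∑ τ, η τ • x τ - lam • θ) := by
    rw [hθhat, funext hr, sum_smul_eq_mulVec_add lam, ← hS, mulVec_add, mulVec_mulVec,
      nonsing_inv_mul _ hdet, one_mulVec, add_sub_cancel_left]
  calc l2norm (θhat - θ)
      ≤ mnorm Sbar⁻¹ (∑ τ, η τ • x τ - lam • θ) / √(minEig Sbar) :=
        herr ▸ l2norm_inv_mulVec_le hpos _
    _ ≤ (mnorm Sbar⁻¹ (∑ τ, η τ • x τ) + √lam * l2norm θ) / √(minEig Sbar) := by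
        gcongr
        exact (mnorm_sub_le hpos.posSemidef.inv _ _).trans
          (add_le_add le_rfl (mnorm_inv_smul_le hlam hle θ))
end

section
/- Let λ > 0, L > 0, γ > 0, λ_x > 0, and let x, x_1, …, x_n ∈ ℝ^d with ‖x‖₂ ≤ L and ‖x_τ‖₂ ≤ L for all τ, and θ, θ_1, …, θ_n ∈ ℝ^d with ‖θ_τ − θ‖₂ ≤ γ for all τ. Define M̄ = λ·I + Σ_{τ=1}^{n} x_τ x_τᵀ and assume λ_min(M̄) ≥ λ + n·λ_x/2. Then: | xᵀ M̄^{−1} Σ_{τ=1}^{n} x_τ x_τᵀ (θ_τ − θ) | ≤ 2 L³ γ / λ_x. -/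
open Matrix

/-!
Write `v = ∑ τ, x_τ x_τᵀ (θ_τ - θ)`. Each summand is `(x_τ ⬝ (θ_τ - θ)) x_τ`, of norm at most
`L²γ`, so `‖v‖ ≤ n L² γ`. Since every eigenvalue of the symmetric matrix `M̄` is at least
`μ = λ + n λ_x / 2 > 0`, we have `μ ‖u‖² ≤ uᵀ M̄ u ≤ ‖u‖ ‖M̄ u‖`, hence `‖M̄⁻¹ v‖ ≤ ‖v‖ / μ`.
Cauchy–Schwarz then gives `|xᵀ M̄⁻¹ v| ≤ L · n L² γ / μ ≤ 2 L³ γ / λ_x`, as `n / μ ≤ 2 / λ_x`.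
-/

section Eigenvalues

variable {n : Type*} [Fintype n] [DecidableEq n] {A : Matrix n n ℝ} {μ : ℝ}

open scoped MatrixOrder in
theorem Matrix.IsHermitian.posSemidef_sub_smul_one (hA : A.IsHermitian)
    (h : ∀ i, μ ≤ hA.eigenvalues i) : (A - μ • 1).PosSemidef := by
  rw [← Matrix.le_iff, ← Algebra.algebraMap_eq_smul_one,
    algebraMap_le_iff_le_spectrum hA.isSelfAdjoint, hA.spectrum_real_eq_range_eigenvalues]
  rintro _ ⟨i, rfl⟩
  exact h i

theorem Matrix.IsHermitian.mul_dotProduct_self_le (hA : A.IsHermitian)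
    (h : ∀ i, μ ≤ hA.eigenvalues i) (u : n → ℝ) : μ * (u ⬝ᵥ u) ≤ u ⬝ᵥ A *ᵥ u := by
  have := (hA.posSemidef_sub_smul_one h).dotProduct_mulVec_nonneg u
  simpa only [star_trivial, sub_mulVec, dotProduct_sub, smul_mulVec, one_mulVec,
    dotProduct_smul, smul_eq_mul, sub_nonneg] using this

theorem Matrix.IsHermitian.isUnit_of_pos_le_eigenvalues (hA : A.IsHermitian) (hμ : 0 < μ)
    (h : ∀ i, μ ≤ hA.eigenvalues i) : IsUnit A :=
  (hA.posDef_iff_eigenvalues_pos.mpr fun i => hμ.trans_le (h i)).isUnit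

end Eigenvalues

theorem le_eigenvalues_of_le_minEig {d : ℕ} {M : Matrix (Fin d) (Fin d) ℝ} (hM : M.IsHermitian)
    {μ : ℝ} (h : μ ≤ minEig M) (i : Fin d) : μ ≤ hM.eigenvalues i := by
  rw [minEig, dif_pos hM] at h
  exact h.trans (ciInf_le (Set.finite_range _).bddBelow i)

section L2Norm

variable {d : ℕ}

theorem l2norm_eq_norm_toLp (v : Fin d → ℝ) : l2norm v = ‖WithLp.toLp 2 v‖ := by
  simp [l2norm, EuclideanSpace.norm_eq]

theorem l2norm_nonneg (v : Fin d → ℝ) : 0 ≤ l2norm v :=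
  Real.sqrt_nonneg _

theorem dotProduct_self_eq_l2norm_sq (v : Fin d → ℝ) : v ⬝ᵥ v = l2norm v ^ 2 := by
  rw [l2norm, Real.sq_sqrt (by positivity)]
  simp [dotProduct, sq]

theorem abs_dotProduct_le_l2norm_mul_l2norm (a b : Fin d → ℝ) :
    |a ⬝ᵥ b| ≤ l2norm a * l2norm b := by
  have := abs_real_inner_le_norm (WithLp.toLp 2 b) (WithLp.toLp 2 a)
  rwa [EuclideanSpace.inner_toLp_toLp, star_trivial, ← l2norm_eq_norm_toLp,
    ← l2norm_eq_norm_toLp, mul_comm (l2norm b)] at this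

theorem l2norm_smul (c : ℝ) (v : Fin d → ℝ) : l2norm (c • v) = |c| * l2norm v := by
  rw [l2norm_eq_norm_toLp, l2norm_eq_norm_toLp, WithLp.toLp_smul, norm_smul, Real.norm_eq_abs]

theorem l2norm_sum_le {ι : Type*} (s : Finset ι) (f : ι → Fin d → ℝ) :
    l2norm (∑ i ∈ s, f i) ≤ ∑ i ∈ s, l2norm (f i) := by
  simp only [l2norm_eq_norm_toLp, WithLp.toLp_sum]
  exact norm_sum_le _ _

theorem l2norm_vecMulVec_self_mulVec_le (x w : Fin d → ℝ) :
    l2norm (vecMulVec x x *ᵥ w) ≤ l2norm x ^ 2 * l2norm w := by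
  rw [vecMulVec_mulVec, op_smul_eq_smul, l2norm_smul]
  calc |x ⬝ᵥ w| * l2norm x ≤ l2norm x * l2norm w * l2norm x := by
        gcongr
        · exact l2norm_nonneg x
        · exact abs_dotProduct_le_l2norm_mul_l2norm x w
    _ = l2norm x ^ 2 * l2norm w := by ring

theorem l2norm_sum_vecMulVec_self_mulVec_le {ι : Type*} [Fintype ι] (xs w : ι → Fin d → ℝ)
    {L γ : ℝ} (hxs : ∀ τ, l2norm (xs τ) ≤ L) (hw : ∀ τ, l2norm (w τ) ≤ γ) :
    l2norm (∑ τ, vecMulVec (xs τ) (xs τ) *ᵥ w τ) ≤ Fintype.card ι * (L ^ 2 * γ) := by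
  calc l2norm (∑ τ, vecMulVec (xs τ) (xs τ) *ᵥ w τ)
      ≤ ∑ τ, l2norm (xs τ) ^ 2 * l2norm (w τ) :=
        (l2norm_sum_le _ _).trans (Finset.sum_le_sum fun τ _ => l2norm_vecMulVec_self_mulVec_le _ _)
    _ ≤ ∑ _τ : ι, L ^ 2 * γ := Finset.sum_le_sum fun τ _ =>
        mul_le_mul (pow_le_pow_left₀ (l2norm_nonneg _) (hxs τ) 2) (hw τ) (l2norm_nonneg _)
          (sq_nonneg L)
    _ = Fintype.card ι * (L ^ 2 * γ) := by simp

variable {A : Matrix (Fin d) (Fin d) ℝ} {μ : ℝ}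

theorem Matrix.IsHermitian.mul_l2norm_le_l2norm_mulVec (hA : A.IsHermitian)
    (h : ∀ i, μ ≤ hA.eigenvalues i) (u : Fin d → ℝ) : μ * l2norm u ≤ l2norm (A *ᵥ u) := by
  have hquad : μ * l2norm u ^ 2 ≤ l2norm u * l2norm (A *ᵥ u) := by
    rw [← dotProduct_self_eq_l2norm_sq]
    exact (hA.mul_dotProduct_self_le h u).trans
      ((le_abs_self _).trans (abs_dotProduct_le_l2norm_mul_l2norm _ _))
  rcases (l2norm_nonneg u).eq_or_lt with hu | hu
  · rw [← hu, mul_zero]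
    exact l2norm_nonneg _
  · nlinarith

theorem Matrix.IsHermitian.l2norm_inv_mulVec_le (hA : A.IsHermitian) (hμ : 0 < μ)
    (h : ∀ i, μ ≤ hA.eigenvalues i) (v : Fin d → ℝ) : l2norm (A⁻¹ *ᵥ v) ≤ l2norm v / μ := by
  have hAinv : A *ᵥ (A⁻¹ *ᵥ v) = v := by
    rw [mulVec_mulVec, mul_nonsing_inv _ ((hA.isUnit_of_pos_le_eigenvalues hμ h).map detMonoidHom),
      one_mulVec]
  have := hA.mul_l2norm_le_l2norm_mulVec h (A⁻¹ *ᵥ v)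
  rwa [hAinv, mul_comm, ← le_div_iff₀ hμ] at this

end L2Norm

theorem stmt_12_general (d n : ℕ) (lam L γ lamx : ℝ)
    (hlam : 0 < lam) (hγ : 0 < γ) (hlamx : 0 < lamx)
    (x : Fin d → ℝ) (hx : l2norm x ≤ L)
    (xs : Fin n → Fin d → ℝ) (hxs : ∀ τ, l2norm (xs τ) ≤ L)
    (θ : Fin d → ℝ) (θs : Fin n → Fin d → ℝ)
    (hθs : ∀ τ, l2norm (θs τ - θ) ≤ γ)
    (Mbar : Matrix (Fin d) (Fin d) ℝ)
    (hM : Mbar = lam • (1 : Matrix (Fin d) (Fin d) ℝ) + ∑ τ, vecMulVec (xs τ) (xs τ))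
    (hmin : lam + n * lamx / 2 ≤ minEig Mbar) :
    |x ⬝ᵥ Mbar⁻¹ *ᵥ (∑ τ, vecMulVec (xs τ) (xs τ) *ᵥ (θs τ - θ))| ≤
      2 * L ^ 3 * γ / lamx := by
  have hL : 0 ≤ L := (l2norm_nonneg x).trans hx
  set μ := lam + n * lamx / 2 with hμ_def
  have hμ : 0 < μ := by positivity
  have hMbar : Mbar.IsHermitian := by
    rw [hM]
    refine (isHermitian_one.smul (IsSelfAdjoint.all lam)).add
      (isSelfAdjoint_sum _ fun τ _ => ?_).isHermitian
    rw [IsSelfAdjoint, star_eq_conjTranspose, conjTranspose_vecMulVec, star_trivial]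
  have hv := l2norm_sum_vecMulVec_self_mulVec_le xs (fun τ => θs τ - θ) hxs hθs
  rw [Fintype.card_fin] at hv
  calc _ ≤ l2norm x * l2norm (Mbar⁻¹ *ᵥ ∑ τ, vecMulVec (xs τ) (xs τ) *ᵥ (θs τ - θ)) :=
        abs_dotProduct_le_l2norm_mul_l2norm _ _
    _ ≤ L * (n * (L ^ 2 * γ) / μ) := by
        refine mul_le_mul hx ?_ (l2norm_nonneg _) hL
        exact (hMbar.l2norm_inv_mulVec_le hμ (le_eigenvalues_of_le_minEig hMbar hmin) _).trans
          (by gcongr)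
    _ = L ^ 3 * γ * (n / μ) := by ring
    _ ≤ L ^ 3 * γ * (2 / lamx) := by
        refine mul_le_mul_of_nonneg_left ?_ (by positivity)
        rw [div_le_div_iff₀ hμ hlamx]
        linarith
    _ = 2 * L ^ 3 * γ / lamx := by ring

/-- Misclustering bias bound: with `‖x‖₂ ≤ L`, `‖x τ‖₂ ≤ L`,
`‖θs τ - θ‖₂ ≤ γ`, `M̄ = λ • I + ∑ τ, x τ x τᵀ` and
`λ_min M̄ ≥ λ + n λ_x / 2`, one has
`|xᵀ M̄⁻¹ ∑ τ, x τ x τᵀ (θs τ - θ)| ≤ 2 L³ γ / λ_x`. -/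
theorem stmt_12 (d n : ℕ) (lam L γ lamx : ℝ)
    (hlam : 0 < lam) (hL : 0 < L) (hγ : 0 < γ) (hlamx : 0 < lamx)
    (x : Fin d → ℝ) (hx : l2norm x ≤ L)
    (xs : Fin n → Fin d → ℝ) (hxs : ∀ τ, l2norm (xs τ) ≤ L)
    (θ : Fin d → ℝ) (θs : Fin n → Fin d → ℝ)
    (hθs : ∀ τ, l2norm (θs τ - θ) ≤ γ)
    (Mbar : Matrix (Fin d) (Fin d) ℝ)
    (hM : Mbar = lam • (1 : Matrix (Fin d) (Fin d) ℝ) + ∑ τ, vecMulVec (xs τ) (xs τ))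
    (hmin : lam + n * lamx / 2 ≤ minEig Mbar) :
    |x ⬝ᵥ Mbar⁻¹ *ᵥ (∑ τ, vecMulVec (xs τ) (xs τ) *ᵥ (θs τ - θ))| ≤
      2 * L ^ 3 * γ / lamx :=
  stmt_12_general d n lam L γ lamx hlam hγ hlamx x hx xs hxs θ θs hθs Mbar hM hmin
end

section
/- Let λ > 0, λ_x > 0, γ > 0, L > 0, d a positive integer, and δ > 0, u > 0 with δ < u. Assume λ ≤ 2·log(u/δ) + d·log(1 + n·L²/(λ·d)) and u/δ ≥ 256·L²/(γ²·λ·λ_x). If the positive integer n satisfies n ≥ max{ 512·log(u/δ)/(γ²·λ_x), (512·d/(γ²·λ_x))·log(u/δ) }, then ( √( 2·log(u/δ) + d·log(1 + n·L²/(λ·d)) ) + √λ ) / √( λ + n·λ_x/2 ) ≤ γ/4. -/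
/-!
Write `ℓ = log (u/δ)` and `A = 2ℓ + d log (1 + n L²/(λ d))`. Since `λ ≤ A`, the numerator is at
most `2√A`, so it suffices that `A ≤ γ² λ_x n / 128`. The first lower bound on `n` controls `2ℓ`.
For the logarithmic term put `y = γ² λ_x n / (256 d)`: the second lower bound on `n` says
`ℓ ≤ y/2`, and the bound on `u/δ` then gives `n L²/(λ d) ≤ y e^ℓ ≤ y e^{y/2} ≤ e^y - 1`, the last
step being `sinh z ≥ z`. Hence `d log (1 + n L²/(λ d)) ≤ d y = γ² λ_x n / 256`.
-/

open Real

lemma one_add_mul_exp_half_le_exp {y : ℝ} (hy : 0 ≤ y) : 1 + y * exp (y / 2) ≤ exp y := by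
  have hsinh : y / 2 ≤ sinh (y / 2) := self_le_sinh_iff.mpr (by linarith)
  have hexp : exp y = exp (y / 2) * exp (y / 2) := by rw [← exp_add, add_halves]
  have hinv : exp (y / 2) * exp (-(y / 2)) = 1 := by rw [← exp_add, add_neg_cancel, exp_zero]
  rw [sinh_eq] at hsinh
  nlinarith [exp_pos (y / 2)]

/-- The case `d = 0` holds trivially because `b / 0 = 0`. -/
lemma mul_log_one_add_div_le {a b d ℓ : ℝ} (hd : 0 ≤ d) (ha : 0 ≤ a) (hb : 0 ≤ b)
    (hdℓ : 2 * d * ℓ ≤ a) (hba : b ≤ a * exp ℓ) : d * log (1 + b / d) ≤ a := by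
  rcases hd.eq_or_lt with rfl | hd
  · simpa using ha
  set y := a / d with hy
  have hy0 : 0 ≤ y := div_nonneg ha hd.le
  have hℓy : ℓ ≤ y / 2 := by
    rw [hy, div_div, le_div_iff₀ (by positivity)]
    linarith
  have hbd : b / d ≤ y * exp (y / 2) :=
    calc b / d ≤ y * exp ℓ := by
          rw [hy, div_mul_eq_mul_div]
          exact div_le_div_of_nonneg_right hba hd.le
      _ ≤ y * exp (y / 2) := mul_le_mul_of_nonneg_left (exp_le_exp.mpr hℓy) hy0
  have hlog : log (1 + b / d) ≤ y := by
    rw [log_le_iff_le_exp (by positivity)]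
    linarith [one_add_mul_exp_half_le_exp hy0]
  calc d * log (1 + b / d) ≤ d * y := mul_le_mul_of_nonneg_left hlog hd.le
    _ = a := mul_div_cancel₀ a hd.ne'

lemma sqrt_add_sqrt_div_sqrt_le {A lam D c : ℝ} (hlam : 0 < lam) (hA : lam ≤ A) (hc : 0 ≤ c)
    (hAD : 4 * A ≤ c ^ 2 * D) : (√A + √lam) / √D ≤ c := by
  have hD : 0 < D := pos_of_mul_pos_right (by linarith) (sq_nonneg c)
  rw [div_le_iff₀ (sqrt_pos.mpr hD)]
  calc √A + √lam ≤ 2 * √A := by linarith [sqrt_le_sqrt hA]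
    _ = √(2 ^ 2 * A) := by rw [sqrt_mul' _ (by linarith), sqrt_sq zero_le_two]
    _ ≤ √(c ^ 2 * D) := sqrt_le_sqrt (by linarith)
    _ = c * √D := by rw [sqrt_mul' _ hD.le, sqrt_sq hc]

theorem stmt_15_general (lam lamx γ L : ℝ) (d : ℕ) (δ u : ℝ)
    (hlam : 0 < lam) (hlamx : 0 < lamx) (hγ : 0 < γ)
    (n : ℕ)
    (hlam_le : lam ≤ 2 * Real.log (u / δ) +
      d * Real.log (1 + n * L ^ 2 / (lam * d)))
    (huδ : 256 * L ^ 2 / (γ ^ 2 * lam * lamx) ≤ u / δ)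
    (hn_ge : max (512 * Real.log (u / δ) / (γ ^ 2 * lamx))
        ((512 * d / (γ ^ 2 * lamx)) * Real.log (u / δ)) ≤ (n : ℝ)) :
    (Real.sqrt (2 * Real.log (u / δ) +
        d * Real.log (1 + n * L ^ 2 / (lam * d))) + Real.sqrt lam) /
      Real.sqrt (lam + n * lamx / 2) ≤ γ / 4 := by
  set ℓ := log (u / δ)
  have hscale : 0 < γ ^ 2 * lamx := by positivity
  have hℓ : 512 * ℓ ≤ n * (γ ^ 2 * lamx) :=
    (div_le_iff₀ hscale).mp (le_max_left _ _ |>.trans hn_ge)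
  have hdℓ : 512 * d * ℓ ≤ n * (γ ^ 2 * lamx) := by
    have := le_max_right _ _ |>.trans hn_ge
    rwa [div_mul_eq_mul_div, div_le_iff₀ hscale] at this
  have hbound : n * L ^ 2 / lam ≤ γ ^ 2 * lamx * n / 256 * exp ℓ := by
    have hexp := huδ.trans (le_exp_log _)
    rw [div_le_iff₀ (by positivity)] at hexp
    rw [div_le_iff₀ hlam]
    nlinarith [Nat.cast_nonneg (α := ℝ) n]
  have hlog : d * log (1 + n * L ^ 2 / (lam * d)) ≤ γ ^ 2 * lamx * n / 256 := by
    rw [← div_div]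
    exact mul_log_one_add_div_le (by positivity) (by positivity) (by positivity) (by linarith)
      hbound
  refine sqrt_add_sqrt_div_sqrt_le hlam hlam_le (by positivity) ?_
  nlinarith [mul_pos (pow_pos hγ 2) hlam]

/-- Sufficient sample size for a small confidence radius: under the stated
conditions on `λ, λ_x, γ, L, d, δ, u`, if
`n ≥ max { 512 log(u/δ) / (γ² λ_x), (512 d / (γ² λ_x)) log(u/δ) }`, then
`(√(2 log(u/δ) + d log(1 + n L² / (λ d))) + √λ) / √(λ + n λ_x / 2) ≤ γ/4`. -/
theorem stmt_15 (lam lamx γ L : ℝ) (d : ℕ) (δ u : ℝ)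
    (hlam : 0 < lam) (hlamx : 0 < lamx) (hγ : 0 < γ) (hL : 0 < L)
    (hd : 0 < d) (hδ : 0 < δ) (hu : 0 < u) (hδu : δ < u)
    (n : ℕ) (hn : 0 < n)
    (hlam_le : lam ≤ 2 * Real.log (u / δ) +
      d * Real.log (1 + n * L ^ 2 / (lam * d)))
    (huδ : 256 * L ^ 2 / (γ ^ 2 * lam * lamx) ≤ u / δ)
    (hn_ge : max (512 * Real.log (u / δ) / (γ ^ 2 * lamx))
        ((512 * d / (γ ^ 2 * lamx)) * Real.log (u / δ)) ≤ (n : ℝ)) :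
    (Real.sqrt (2 * Real.log (u / δ) +
        d * Real.log (1 + n * L ^ 2 / (lam * d))) + Real.sqrt lam) /
      Real.sqrt (lam + n * lamx / 2) ≤ γ / 4 :=
  stmt_15_general lam lamx γ L d δ u hlam hlamx hγ n hlam_le huδ hn_ge
end
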